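/- arXiv:1412.5864 — 7 statements merged into one kernel-verified Lean document; each statement's English description precedes it below -/
import Mathlib

section
/- Let A be an m×n real matrix with rank ρ, with SVD A = S Σ Tᵀ, and let T_{ρ,A} denote the n×ρ matrix of the first ρ right singular vectors. Let V be a ρ×ρ₊ real matrix with orthonormal rows (ρ₊ ≥ ρ), let Q be an n×ρ₊ matrix, and write Δ = Q − T_{ρ,A}·V. Then ‖A·Q·Qᵀ − A‖ ≤ ((2 + ‖Δ‖)·‖Δ‖)·‖A‖ + σ_{ρ+1}(A), where σ_{ρ+1}(A) denotes the (ρ+1)-st singular value of A (equal to 0 if ρ+1 > min(m,n)) and ‖·‖ is the spectral norm. -/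
open Matrix
open scoped Matrix.Norms.L2Operator

/-- The `j`-th largest singular value (1-indexed) of a real matrix, characterized by
Eckart–Young: `σ_j(A) = inf { ‖A - B‖ : rank B < j }` (spectral norm).
In particular `σ_1(A) = ‖A‖` and `σ_j(A) = 0` for `j > rank A`. -/
noncomputable def singVal {m n : Type*} [Fintype m] [Fintype n] [DecidableEq n]
    (A : Matrix m n ℝ) (j : ℕ) : ℝ :=
  sInf ((fun B : Matrix m n ℝ => ‖A - B‖) '' {B | B.rank < j})

/-!
Since `rank A = ρ`, the singular values `σ_j(A)` vanish for `j > ρ`, so only the first `ρ` columns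
of `T` enter `A = S Σ Tᵀ` and `A Tρ Tρᵀ = A`. With `W = Tρ V` this gives `A W Wᵀ = A` and
`‖W‖ ≤ 1`, and expanding `Q = W + Δ` leaves
`A Q Qᵀ - A = A W Δᵀ + A Δ Wᵀ + A Δ Δᵀ`, whose norm is at most `(2 + ‖Δ‖) ‖Δ‖ ‖A‖`.
-/

section
variable {m n : Type*} [Fintype m] [Fintype n] [DecidableEq n]

lemma singVal_nonneg (A : Matrix m n ℝ) (j : ℕ) : 0 ≤ singVal A j :=
  Real.sInf_nonneg <| by rintro x ⟨B, -, rfl⟩; positivity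

lemma singVal_eq_zero_of_rank_lt {A : Matrix m n ℝ} {j : ℕ} (h : A.rank < j) :
    singVal A j = 0 :=
  le_antisymm (csInf_le ⟨0, by rintro x ⟨B, -, rfl⟩; positivity⟩ ⟨A, h, by simp⟩)
    (singVal_nonneg A j)

end

lemma apply_eq_zero_of_rank_le_of_eq_singVal_diag {p q : ℕ} {A Sig : Matrix (Fin p) (Fin q) ℝ}
    (hSig : ∀ i j, Sig i j = if (i : ℕ) = (j : ℕ) then singVal A ((i : ℕ) + 1) else 0)
    (i : Fin p) {k : Fin q} (hk : A.rank ≤ k) : Sig i k = 0 := by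
  rw [hSig]
  split_ifs with hik
  · exact singVal_eq_zero_of_rank_lt (by omega)
  · rfl

namespace Matrix

section L2OpNorm
variable {𝕜 l m n : Type*} [RCLike 𝕜] [Fintype l] [Fintype m] [Fintype n] [DecidableEq n]

lemma l2_opNorm_one_le : ‖(1 : Matrix n n 𝕜)‖ ≤ 1 := by
  have h := l2_opNorm_conjTranspose_mul_self (1 : Matrix n n 𝕜)
  rw [conjTranspose_one, Matrix.one_mul] at h
  nlinarith [norm_nonneg (1 : Matrix n n 𝕜)]

lemma l2_opNorm_le_one_of_conjTranspose_mul_self_eq_one {M : Matrix m n 𝕜} (h : Mᴴ * M = 1) :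
    ‖M‖ ≤ 1 := by
  have h2 := l2_opNorm_conjTranspose_mul_self M
  rw [h] at h2
  nlinarith [norm_nonneg M, l2_opNorm_one_le (𝕜 := 𝕜) (n := n)]

lemma l2_opNorm_mul_mul_le {p : Type*} [Fintype p] [DecidableEq m] [DecidableEq p]
    (A : Matrix l m 𝕜) (B : Matrix m n 𝕜) (C : Matrix n p 𝕜) : ‖A * B * C‖ ≤ ‖A‖ * ‖B‖ * ‖C‖ :=
  (l2_opNorm_mul _ _).trans <| by gcongr; exact l2_opNorm_mul _ _

end L2OpNorm

lemma l2_opNorm_transpose {m n : Type*} [Fintype m] [Fintype n] [DecidableEq m] [DecidableEq n]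
    (M : Matrix m n ℝ) : ‖Mᵀ‖ = ‖M‖ := by
  rw [← conjTranspose_eq_transpose_of_trivial, l2_opNorm_conjTranspose]

lemma submatrix_mul_transpose_submatrix_of_injective {α l n o p : Type*} [Fintype n] [Fintype o]
    [NonUnitalNonAssocSemiring α] (M : Matrix l n α) (N : Matrix p n α) {e : o → n}
    (he : Function.Injective e) (hM : ∀ i, ∀ k ∉ Set.range e, M i k = 0) :
    M.submatrix id e * (N.submatrix id e)ᵀ = M * Nᵀ := by
  ext i j
  simp only [mul_apply, submatrix_apply, transpose_apply, id]
  exact Fintype.sum_of_injective e he _ _ (fun k hk => by simp [hM i k hk]) fun _ => rfl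

lemma mul_submatrix_mul_transpose_submatrix_eq_self {α m n o r : Type*} [Semiring α] [Fintype n]
    [Fintype o] [Fintype r] [DecidableEq n] {A : Matrix m n α} {S : Matrix m r α} {D : Matrix r n α}
    {T : Matrix n n α} (hT : Tᵀ * T = 1) (hA : A = S * D * Tᵀ) {e : o → n}
    (he : Function.Injective e) (hD : ∀ i, ∀ k ∉ Set.range e, D i k = 0) :
    A * T.submatrix id e * (T.submatrix id e)ᵀ = A := by
  have hDe : D * (Tᵀ * T.submatrix id e) = D.submatrix id e := by
    change (D * (Tᵀ * T)).submatrix id e = _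
    rw [hT, Matrix.mul_one]
  calc A * T.submatrix id e * (T.submatrix id e)ᵀ
      = S * (D * (Tᵀ * T.submatrix id e) * (T.submatrix id e)ᵀ) := by
        rw [hA]; simp only [Matrix.mul_assoc]
    _ = S * (D * Tᵀ) := by
        rw [hDe, submatrix_mul_transpose_submatrix_of_injective _ _ he hD]
    _ = A := by rw [hA, Matrix.mul_assoc]

lemma transpose_submatrix_mul_submatrix_eq_one {α n o : Type*} [Semiring α] [Fintype n]
    [DecidableEq n] [DecidableEq o] {T : Matrix n n α} (hT : Tᵀ * T = 1) {e : o → n}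
    (he : Function.Injective e) : (T.submatrix id e)ᵀ * T.submatrix id e = 1 := by
  change (Tᵀ * T).submatrix e e = 1
  rw [hT, submatrix_one _ he]

lemma mul_add_mul_transpose_add_sub_eq {α m n k : Type*} [CommRing α] [Fintype n] [Fintype k]
    {A : Matrix m n α} {W : Matrix n k α} (hW : A * W * Wᵀ = A) (Δ : Matrix n k α) :
    A * (W + Δ) * (W + Δ)ᵀ - A = A * W * Δᵀ + A * Δ * Wᵀ + A * Δ * Δᵀ := by
  simp only [transpose_add, Matrix.mul_add, Matrix.add_mul, hW]
  abel

lemma norm_mul_add_mul_transpose_add_sub_le {m n k : Type*} [Fintype m] [Fintype n] [Fintype k]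
    [DecidableEq m] [DecidableEq n] [DecidableEq k] {A : Matrix m n ℝ} {W : Matrix n k ℝ}
    (hW : A * W * Wᵀ = A) (hW1 : ‖W‖ ≤ 1) (Δ : Matrix n k ℝ) :
    ‖A * (W + Δ) * (W + Δ)ᵀ - A‖ ≤ (2 + ‖Δ‖) * ‖Δ‖ * ‖A‖ := by
  have hWt : ‖Wᵀ‖ ≤ 1 := (l2_opNorm_transpose W).trans_le hW1
  have h₁ := l2_opNorm_mul_mul_le A W Δᵀ
  have h₂ := l2_opNorm_mul_mul_le A Δ Wᵀ
  have h₃ := l2_opNorm_mul_mul_le A Δ Δᵀ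
  rw [l2_opNorm_transpose] at h₁ h₃
  rw [mul_add_mul_transpose_add_sub_eq hW]
  calc ‖A * W * Δᵀ + A * Δ * Wᵀ + A * Δ * Δᵀ‖
      ≤ ‖A * W * Δᵀ‖ + ‖A * Δ * Wᵀ‖ + ‖A * Δ * Δᵀ‖ := norm_add₃_le
    _ ≤ ‖A‖ * 1 * ‖Δ‖ + ‖A‖ * ‖Δ‖ * 1 + ‖A‖ * ‖Δ‖ * ‖Δ‖ := by
        gcongr
        · exact h₁.trans (by gcongr)
        · exact h₂.trans (by gcongr)
    _ = (2 + ‖Δ‖) * ‖Δ‖ * ‖A‖ := by ring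

end Matrix

theorem stmt0_general {m n ρ ρp : ℕ} (hρn : ρ ≤ n)
    (A : Matrix (Fin m) (Fin n) ℝ) (S : Matrix (Fin m) (Fin m) ℝ)
    (T : Matrix (Fin n) (Fin n) ℝ) (Sig : Matrix (Fin m) (Fin n) ℝ)
    (hrank : A.rank = ρ)
    (hT : Tᵀ * T = 1)
    (hSig : ∀ i j, Sig i j = if (i : ℕ) = (j : ℕ) then singVal A ((i : ℕ) + 1) else 0)
    (hA : A = S * Sig * Tᵀ)
    (V : Matrix (Fin ρ) (Fin ρp) ℝ) (hV : V * Vᵀ = 1)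
    (Q : Matrix (Fin n) (Fin ρp) ℝ)
    (Tρ : Matrix (Fin n) (Fin ρ) ℝ)
    (hTρ : Tρ = T.submatrix id (Fin.castLE hρn))
    (Δ : Matrix (Fin n) (Fin ρp) ℝ) (hΔ : Δ = Q - Tρ * V) :
    ‖A * Q * Qᵀ - A‖ ≤ (2 + ‖Δ‖) * ‖Δ‖ * ‖A‖ + singVal A (ρ + 1) := by
  have hSig_cols : ∀ i, ∀ k ∉ Set.range (Fin.castLE hρn), Sig i k = 0 := fun i k hk =>
    apply_eq_zero_of_rank_le_of_eq_singVal_diag hSig i <|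
      hrank ▸ not_lt.1 fun h => hk ⟨⟨k, h⟩, rfl⟩
  have hproj : A * Tρ * Tρᵀ = A := hTρ ▸
    mul_submatrix_mul_transpose_submatrix_eq_self hT hA (Fin.castLE_injective hρn) hSig_cols
  have hTρ1 : ‖Tρ‖ ≤ 1 := by
    refine l2_opNorm_le_one_of_conjTranspose_mul_self_eq_one ?_
    rw [conjTranspose_eq_transpose_of_trivial, hTρ]
    exact transpose_submatrix_mul_submatrix_eq_one hT (Fin.castLE_injective hρn)
  have hV1 : ‖V‖ ≤ 1 := by
    rw [← l2_opNorm_transpose]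
    refine l2_opNorm_le_one_of_conjTranspose_mul_self_eq_one ?_
    rwa [conjTranspose_eq_transpose_of_trivial, transpose_transpose]
  have hW : A * (Tρ * V) * (Tρ * V)ᵀ = A :=
    calc A * (Tρ * V) * (Tρ * V)ᵀ = A * Tρ * (V * Vᵀ) * Tρᵀ := by
          simp only [transpose_mul, Matrix.mul_assoc]
      _ = A := by rw [hV, Matrix.mul_one, hproj]
  have hW1 : ‖Tρ * V‖ ≤ 1 :=
    (l2_opNorm_mul _ _).trans (mul_le_one₀ hTρ1 (norm_nonneg _) hV1)
  obtain rfl : Q = Tρ * V + Δ := by rw [hΔ]; abel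
  exact (norm_mul_add_mul_transpose_add_sub_le hW hW1 Δ).trans
    (le_add_of_nonneg_right (singVal_nonneg A _))

theorem stmt0 {m n ρ ρp : ℕ} (hρn : ρ ≤ n) (hρp : ρ ≤ ρp)
    (A : Matrix (Fin m) (Fin n) ℝ) (S : Matrix (Fin m) (Fin m) ℝ)
    (T : Matrix (Fin n) (Fin n) ℝ) (Sig : Matrix (Fin m) (Fin n) ℝ)
    (hrank : A.rank = ρ)
    (hS : Sᵀ * S = 1) (hT : Tᵀ * T = 1)
    (hSig : ∀ i j, Sig i j = if (i : ℕ) = (j : ℕ) then singVal A ((i : ℕ) + 1) else 0)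
    (hA : A = S * Sig * Tᵀ)
    (V : Matrix (Fin ρ) (Fin ρp) ℝ) (hV : V * Vᵀ = 1)
    (Q : Matrix (Fin n) (Fin ρp) ℝ)
    (Tρ : Matrix (Fin n) (Fin ρ) ℝ)
    (hTρ : Tρ = T.submatrix id (Fin.castLE hρn))
    (Δ : Matrix (Fin n) (Fin ρp) ℝ) (hΔ : Δ = Q - Tρ * V) :
    ‖A * Q * Qᵀ - A‖ ≤ (2 + ‖Δ‖) * ‖Δ‖ * ‖A‖ + singVal A (ρ + 1) :=
  stmt0_general hρn A S T Sig hrank hT hSig hA V hV Q Tρ hTρ Δ hΔ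
end

section
/- Let A ∈ ℝ^{m×n}, V ∈ ℝ^{n×s}, and let K̂ ∈ ℝ^{(s+m)×n} be the block matrix with Vᵀ stacked on top of A. Suppose rank(V) = s, rank(K̂) = n, and m ≥ n. Let X ∈ ℝ^{n×(s+m)} be any left inverse of K̂ (i.e., X K̂ = I_n), and set Ŷ = X · (I_s; O_{m,s}) ∈ ℝ^{n×s} (the product of X with the (s+m)×s matrix whose top s×s block is I_s and bottom block is zero). Then the null space of A is contained in the column space (range) of Ŷ. -/
open Matrix

theorem stmt1 {m n s : ℕ} (hmn : n ≤ m)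
    (A : Matrix (Fin m) (Fin n) ℝ) (V : Matrix (Fin n) (Fin s) ℝ)
    (K : Matrix (Fin s ⊕ Fin m) (Fin n) ℝ) (hK : K = Matrix.fromRows Vᵀ A)
    (hV : V.rank = s) (hKrank : K.rank = n)
    (X : Matrix (Fin n) (Fin s ⊕ Fin m) ℝ) (hX : X * K = 1)
    (Y : Matrix (Fin n) (Fin s) ℝ)
    (hY : Y = X * Matrix.fromRows (1 : Matrix (Fin s) (Fin s) ℝ)
        (0 : Matrix (Fin m) (Fin s) ℝ)) :
    LinearMap.ker A.mulVecLin ≤ LinearMap.range Y.mulVecLin := by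
  intro x hx
  simp only [LinearMap.mem_ker, mulVecLin_apply] at hx
  refine ⟨Vᵀ.mulVec x, ?_⟩
  have : Y.mulVec (Vᵀ.mulVec x) = x := by
    rw [hY, ← mulVec_mulVec, fromRows_mulVec, zero_mulVec, one_mulVec,
      ← hx, ← fromRows_mulVec, ← hK, mulVec_mulVec, hX, one_mulVec]
  simpa using this
end

section
/- Under the assumptions of the previous setting (K̂ = [Vᵀ; A] with rank(V)=s, rank(K̂)=n, m ≥ n, X a left inverse of K̂, Ŷ = X·(I_s; O_{m,s})), if additionally s + rank(A) = n, then the null space of A equals the range of Ŷ. -/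
open Matrix

namespace Matrix

section LeftInverse

variable {R : Type*} [CommSemiring R] {n l m : Type*} [Fintype l] [Fintype m]

lemma mul_fromRows_one_zero [DecidableEq l] (X : Matrix n (l ⊕ m) R) :
    X * fromRows (1 : Matrix l l R) (0 : Matrix m l R) = X.toCols₁ := by
  rw [← fromCols_toCols X, fromCols_mul_fromRows, Matrix.mul_one, Matrix.mul_zero, add_zero,
    toCols₁_fromCols]

/-- Splitting `x = X₁ (B x) + X₂ (A x)` shows that `x = X₁ (B x)` whenever `A x = 0`. -/
lemma ker_mulVecLin_le_range_toCols₁ [Fintype n] [DecidableEq n] {B : Matrix l n R}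
    {A : Matrix m n R} {X : Matrix n (l ⊕ m) R} (hX : X * fromRows B A = 1) :
    LinearMap.ker A.mulVecLin ≤ LinearMap.range X.toCols₁.mulVecLin := by
  intro x hx
  have hAx : A *ᵥ x = 0 := hx
  have hsplit : X.toCols₁ * B + X.toCols₂ * A = 1 := by
    rwa [← fromCols_toCols X, fromCols_mul_fromRows] at hX
  refine ⟨B *ᵥ x, ?_⟩
  calc X.toCols₁ *ᵥ (B *ᵥ x) = (X.toCols₁ * B + X.toCols₂ * A) *ᵥ x := by
        rw [add_mulVec, ← mulVec_mulVec, ← mulVec_mulVec, hAx, mulVec_zero, add_zero]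
    _ = x := by rw [hsplit, one_mulVec]

end LeftInverse

lemma rank_add_finrank_ker_mulVecLin {K : Type*} [Field K] {m n : Type*} [Fintype n]
    (A : Matrix m n K) :
    A.rank + Module.finrank K (LinearMap.ker A.mulVecLin) = Fintype.card n := by
  rw [rank, LinearMap.finrank_range_add_finrank_ker, Module.finrank_fintype_fun_eq_card]

end Matrix

theorem stmt2_general {m n s : ℕ}
    (A : Matrix (Fin m) (Fin n) ℝ) (V : Matrix (Fin n) (Fin s) ℝ)
    (K : Matrix (Fin s ⊕ Fin m) (Fin n) ℝ) (hK : K = Matrix.fromRows Vᵀ A)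
    (X : Matrix (Fin n) (Fin s ⊕ Fin m) ℝ) (hX : X * K = 1)
    (Y : Matrix (Fin n) (Fin s) ℝ)
    (hY : Y = X * Matrix.fromRows (1 : Matrix (Fin s) (Fin s) ℝ)
        (0 : Matrix (Fin m) (Fin s) ℝ))
    (hsum : s + A.rank = n) :
    LinearMap.ker A.mulVecLin = LinearMap.range Y.mulVecLin := by
  subst hK hY
  rw [mul_fromRows_one_zero]
  refine Submodule.eq_of_le_of_finrank_le (ker_mulVecLin_le_range_toCols₁ hX) ?_
  have hnullity := rank_add_finrank_ker_mulVecLin A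
  rw [Fintype.card_fin] at hnullity
  calc Module.finrank ℝ (LinearMap.range X.toCols₁.mulVecLin) = X.toCols₁.rank := rfl
    _ ≤ s := rank_le_width _
    _ = Module.finrank ℝ (LinearMap.ker A.mulVecLin) := by omega

theorem stmt2 {m n s : ℕ} (hmn : n ≤ m)
    (A : Matrix (Fin m) (Fin n) ℝ) (V : Matrix (Fin n) (Fin s) ℝ)
    (K : Matrix (Fin s ⊕ Fin m) (Fin n) ℝ) (hK : K = Matrix.fromRows Vᵀ A)
    (hV : V.rank = s) (hKrank : K.rank = n)
    (X : Matrix (Fin n) (Fin s ⊕ Fin m) ℝ) (hX : X * K = 1)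
    (Y : Matrix (Fin n) (Fin s) ℝ)
    (hY : Y = X * Matrix.fromRows (1 : Matrix (Fin s) (Fin s) ℝ)
        (0 : Matrix (Fin m) (Fin s) ℝ))
    (hsum : s + A.rank = n) :
    LinearMap.ker A.mulVecLin = LinearMap.range Y.mulVecLin :=
  stmt2_general A V K hK X hX Y hY hsum
end

section
/- Let A ∈ ℝ^{m×n} have rank ρ, let U ∈ ℝ^{m×r} and V ∈ ℝ^{n×r}, and suppose C = A + U Vᵀ has full column rank n. Let X be a left inverse of C (X C = I_n) and Y = X U ∈ ℝ^{n×r}. Then the null space of A is contained in the range of Y, and moreover r ≥ n − ρ. -/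
open Matrix

theorem stmt3 {m n r ρ : ℕ}
    (A : Matrix (Fin m) (Fin n) ℝ) (hρ : A.rank = ρ)
    (U : Matrix (Fin m) (Fin r) ℝ) (V : Matrix (Fin n) (Fin r) ℝ)
    (C : Matrix (Fin m) (Fin n) ℝ) (hC : C = A + U * Vᵀ) (hCrank : C.rank = n)
    (X : Matrix (Fin n) (Fin m) ℝ) (hX : X * C = 1)
    (Y : Matrix (Fin n) (Fin r) ℝ) (hY : Y = X * U) :
    LinearMap.ker A.mulVecLin ≤ LinearMap.range Y.mulVecLin ∧ n - ρ ≤ r := by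
  have hker : LinearMap.ker A.mulVecLin ≤ LinearMap.range Y.mulVecLin := by
    intro x hx
    simp only [LinearMap.mem_ker, mulVecLin_apply] at hx
    refine ⟨Vᵀ.mulVec x, ?_⟩
    have hx2 : C.mulVec x = U.mulVec (Vᵀ.mulVec x) := by
      rw [hC, add_mulVec, hx, zero_add, ← mulVec_mulVec]
    have : (X * C).mulVec x = x := by rw [hX, one_mulVec]
    calc Y.mulVecLin (Vᵀ.mulVec x) = Y.mulVec (Vᵀ.mulVec x) := rfl
      _ = X.mulVec (U.mulVec (Vᵀ.mulVec x)) := by rw [hY, ← mulVec_mulVec]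
      _ = X.mulVec (C.mulVec x) := by rw [hx2]
      _ = x := by rw [mulVec_mulVec, hX, one_mulVec]
  refine ⟨hker, ?_⟩
  have h1 : Module.finrank ℝ (LinearMap.ker A.mulVecLin) ≤
      Module.finrank ℝ (LinearMap.range Y.mulVecLin) :=
    Submodule.finrank_mono hker
  have h2 : Module.finrank ℝ (LinearMap.range Y.mulVecLin) ≤ r := by
    have := Y.rank_le_card_width
    simpa [Matrix.rank] using this
  have h3 : Module.finrank ℝ (LinearMap.range A.mulVecLin) +
      Module.finrank ℝ (LinearMap.ker A.mulVecLin) = n := by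
    simpa using LinearMap.finrank_range_add_finrank_ker A.mulVecLin
  have h5 : Module.finrank ℝ (LinearMap.range A.mulVecLin) = ρ := by
    rw [Matrix.rank] at hρ; exact hρ
  omega
end

section
/- With A, U, V, C = A + UVᵀ, X a left inverse of C, and Y = X U as above, if additionally r + rank(A) = n, then the null space of A equals the range of Y. -/
open Matrix

theorem stmt4 {m n r ρ : ℕ}
    (A : Matrix (Fin m) (Fin n) ℝ) (hρ : A.rank = ρ)
    (U : Matrix (Fin m) (Fin r) ℝ) (V : Matrix (Fin n) (Fin r) ℝ)
    (C : Matrix (Fin m) (Fin n) ℝ) (hC : C = A + U * Vᵀ) (hCrank : C.rank = n)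
    (X : Matrix (Fin n) (Fin m) ℝ) (hX : X * C = 1)
    (Y : Matrix (Fin n) (Fin r) ℝ) (hY : Y = X * U)
    (hsum : r + A.rank = n) :
    LinearMap.ker A.mulVecLin = LinearMap.range Y.mulVecLin := by
  have hle : LinearMap.ker A.mulVecLin ≤ LinearMap.range Y.mulVecLin := by
    intro v hv
    have hv' : A.mulVec v = 0 := hv
    refine ⟨Vᵀ.mulVec v, ?_⟩
    have key : (X * U * Vᵀ).mulVec v = v := by
      have : X * U * Vᵀ = 1 - X * A := by
        have : X * (A + U * Vᵀ) = 1 := by rw [← hC]; exact hX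
        rw [Matrix.mul_add] at this
        rw [← this, add_sub_cancel_left, Matrix.mul_assoc]
      rw [this, Matrix.sub_mulVec, Matrix.one_mulVec, ← Matrix.mulVec_mulVec, hv',
        Matrix.mulVec_zero, sub_zero]
    simp only [mulVecLin_apply, hY, Matrix.mulVec_mulVec]
    exact key
  refine Submodule.eq_of_le_of_finrank_le hle ?_
  have h1 : Module.finrank ℝ (LinearMap.range Y.mulVecLin) ≤ r := by
    have := Matrix.rank_le_card_width Y
    simpa [Matrix.rank] using this
  have h2 : Module.finrank ℝ (LinearMap.ker A.mulVecLin) = r := by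
    have := LinearMap.finrank_range_add_finrank_ker A.mulVecLin
    have hdom : Module.finrank ℝ (Fin n → ℝ) = n := by simp
    rw [hdom] at this
    have hr : Module.finrank ℝ (LinearMap.range A.mulVecLin) = A.rank := rfl
    omega
  omega
end

section
/- With A, U, V, C = A + UVᵀ, X a left inverse of C, and Y = X U ∈ ℝ^{n×r} as above, if Z is a matrix whose range equals the null space of A·Y, then the null space of A equals the range of Y·Z. -/
open Matrix

theorem stmt5 {m n r k ρ : ℕ}
    (A : Matrix (Fin m) (Fin n) ℝ) (hρ : A.rank = ρ)
    (U : Matrix (Fin m) (Fin r) ℝ) (V : Matrix (Fin n) (Fin r) ℝ)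
    (C : Matrix (Fin m) (Fin n) ℝ) (hC : C = A + U * Vᵀ) (hCrank : C.rank = n)
    (X : Matrix (Fin n) (Fin m) ℝ) (hX : X * C = 1)
    (Y : Matrix (Fin n) (Fin r) ℝ) (hY : Y = X * U)
    (Z : Matrix (Fin r) (Fin k) ℝ)
    (hZ : LinearMap.range Z.mulVecLin = LinearMap.ker (A * Y).mulVecLin) :
    LinearMap.ker A.mulVecLin = LinearMap.range (Y * Z).mulVecLin := by
  apply le_antisymm
  · intro v hv
    simp only [LinearMap.mem_ker, mulVecLin_apply] at hv
    have hv' : v = Y *ᵥ (Vᵀ *ᵥ v) := by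
      have h1 : X *ᵥ (C *ᵥ v) = v := by
        rw [mulVec_mulVec, hX, one_mulVec]
      rw [hC, add_mulVec, mulVec_add, hv, mulVec_zero, zero_add,
        ← mulVec_mulVec v U Vᵀ, mulVec_mulVec (Vᵀ *ᵥ v) X U, ← hY] at h1
      exact h1.symm
    have hker : Vᵀ *ᵥ v ∈ LinearMap.ker (A * Y).mulVecLin := by
      simp only [LinearMap.mem_ker, mulVecLin_apply, ← mulVec_mulVec]
      rw [← hv', hv]
    rw [← hZ] at hker
    obtain ⟨w, hw⟩ := hker
    refine ⟨w, ?_⟩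
    simp only [mulVecLin_apply] at hw ⊢
    rw [← mulVec_mulVec, hw, ← hv']
  · rintro v ⟨w, rfl⟩
    have hk : Z *ᵥ w ∈ LinearMap.ker (A * Y).mulVecLin := by
      rw [← hZ]; exact ⟨w, rfl⟩
    simp only [LinearMap.mem_ker, mulVecLin_apply, ← mulVec_mulVec] at hk ⊢
    exact hk
end

section
/- In the same setting (C = S R_U D R_Vᵀ Tᵀ with D = diag(σ_1,…,σ_ρ,1,…,1), σ_j > 0, U_r and V_r invertible, ‖A‖=1), the smallest singular value of C does not exceed the smallest positive singular value of A: σ_n(C) ≤ σ_ρ(A). Equivalently, ‖C⁻¹‖ ≥ 1/σ_ρ(A). -/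
open Matrix
open scoped Matrix.Norms.L2Operator

/-! Let `k = ρ - 1`. Since `V_r` is invertible, the `k`-th standard basis vector `e_k` can be
completed by a last block `w` so that `y = T (e_k, w)` lies in the kernel of `Vᵀ`. Then `C y = A y = S (σ_k e_k, 0)`, so `‖C y‖ = σ_k` while `‖y‖ ≥ 1`. This gives
`‖C⁻¹‖ ≥ ‖y‖ / ‖C y‖ ≥ 1 / σ_k`, and subtracting the rank-one matrix `(C y) yᵀ / ‖y‖²` from `C`
leaves a matrix that kills `y`, at distance `‖C y‖ / ‖y‖ ≤ σ_k` from `C`. -/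

open WithLp

namespace Matrix

theorem rank_lt_card_of_mulVec_eq_zero {m n K : Type*} [Fintype n] [Field K]
    {B : Matrix m n K} {y : n → K} (hy : y ≠ 0) (hBy : B *ᵥ y = 0) :
    B.rank < Fintype.card n := by
  have hker : 0 < Module.finrank K (LinearMap.ker B.mulVecLin) :=
    Module.finrank_pos_iff_exists_ne_zero.mpr ⟨⟨y, hBy⟩, fun h => hy (congrArg Subtype.val h)⟩
  have := B.mulVecLin.finrank_range_add_finrank_ker
  rw [Module.finrank_pi] at this
  exact rank.eq_def B ▸ by omega

theorem exists_fromCols_mulVec_sumElim_eq_zero {m n R : Type*} [Fintype m] [Fintype n]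
    [DecidableEq n] [CommRing R] (P : Matrix n m R) {Q : Matrix n n R} (hQ : IsUnit Q)
    (x : m → R) : ∃ y, fromCols P Q *ᵥ Sum.elim x y = 0 :=
  ⟨-(Q⁻¹ *ᵥ (P *ᵥ x)), by
    rw [fromCols_mulVec_sumElim, mulVec_neg, mulVec_mulVec, mul_nonsing_inv Q
      ((isUnit_iff_isUnit_det Q).mp hQ), one_mulVec, add_neg_cancel]⟩

variable {m n : Type*} [Fintype m] [Fintype n]

theorem norm_toLp_sq_eq_dotProduct (x : n → ℝ) : ‖toLp 2 x‖ ^ 2 = x ⬝ᵥ x := by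
  rw [← real_inner_self_eq_norm_sq, EuclideanSpace.inner_toLp_toLp, star_trivial]

theorem norm_toLp_sumElim_sq (x : m → ℝ) (y : n → ℝ) :
    ‖toLp 2 (Sum.elim x y)‖ ^ 2 = ‖toLp 2 x‖ ^ 2 + ‖toLp 2 y‖ ^ 2 := by
  simp only [norm_toLp_sq_eq_dotProduct, sumElim_dotProduct_sumElim]

theorem norm_toLp_le_norm_toLp_sumElim (x : m → ℝ) (y : n → ℝ) :
    ‖toLp 2 x‖ ≤ ‖toLp 2 (Sum.elim x y)‖ :=
  (sq_le_sq₀ (norm_nonneg _) (norm_nonneg _)).mp <|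
    norm_toLp_sumElim_sq x y ▸ le_add_of_nonneg_right (sq_nonneg _)

theorem norm_toLp_sumElim_zero (x : m → ℝ) : ‖toLp 2 (Sum.elim x (0 : n → ℝ))‖ = ‖toLp 2 x‖ :=
  (sq_eq_sq₀ (norm_nonneg _) (norm_nonneg _)).mp <| by
    rw [norm_toLp_sumElim_sq, WithLp.toLp_zero, norm_zero]
    ring

theorem norm_toLp_mulVec_of_transpose_mul_self [DecidableEq n] {S : Matrix m n ℝ}
    (hS : Sᵀ * S = 1) (x : n → ℝ) : ‖toLp 2 (S *ᵥ x)‖ = ‖toLp 2 x‖ := by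
  refine (sq_eq_sq₀ (norm_nonneg _) (norm_nonneg _)).mp ?_
  rw [norm_toLp_sq_eq_dotProduct, norm_toLp_sq_eq_dotProduct, dotProduct_mulVec,
    ← mulVec_transpose, mulVec_mulVec, hS, one_mulVec]

theorem norm_toLp_le_norm_inv_mul [DecidableEq n] {C : Matrix n n ℝ} (hC : IsUnit C)
    (x : n → ℝ) : ‖toLp 2 x‖ ≤ ‖C⁻¹‖ * ‖toLp 2 (C *ᵥ x)‖ := by
  simpa [mulVec_mulVec, nonsing_inv_mul C ((isUnit_iff_isUnit_det C).mp hC)]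
    using l2_opNorm_mulVec C⁻¹ (toLp 2 (C *ᵥ x))

theorem norm_vecMulVec_le [DecidableEq n] (a : m → ℝ) (b : n → ℝ) :
    ‖vecMulVec a b‖ ≤ ‖toLp 2 a‖ * ‖toLp 2 b‖ := by
  refine ContinuousLinearMap.opNorm_le_bound _ (by positivity) fun x => ?_
  change ‖toLp 2 (vecMulVec a b *ᵥ ofLp x)‖ ≤ _
  have hCS : |b ⬝ᵥ ofLp x| ≤ ‖x‖ * ‖toLp 2 b‖ := by
    simpa [EuclideanSpace.inner_eq_star_dotProduct] using
      abs_real_inner_le_norm x (toLp 2 b)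
  rw [vecMulVec_mulVec, op_smul_eq_smul, toLp_smul, norm_smul, Real.norm_eq_abs]
  nlinarith [norm_nonneg (toLp 2 a)]

theorem singVal_le_norm_sub [DecidableEq n] (C B : Matrix m n ℝ) {j : ℕ} (hB : B.rank < j) :
    singVal C j ≤ ‖C - B‖ :=
  csInf_le ⟨0, by rintro _ ⟨B', -, rfl⟩; exact norm_nonneg _⟩ ⟨B, hB, rfl⟩

theorem singVal_card_le_norm_mulVec_div [DecidableEq n] (C : Matrix m n ℝ) {y : n → ℝ}
    (hy : y ≠ 0) : singVal C (Fintype.card n) ≤ ‖toLp 2 (C *ᵥ y)‖ / ‖toLp 2 y‖ := by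
  have hy0 : 0 < ‖toLp 2 y‖ := norm_pos_iff.mpr (by simpa using hy)
  set P := (‖toLp 2 y‖ ^ 2)⁻¹ • vecMulVec (C *ᵥ y) y
  have hPy : P *ᵥ y = C *ᵥ y := by
    rw [smul_mulVec, vecMulVec_mulVec, op_smul_eq_smul, ← norm_toLp_sq_eq_dotProduct, smul_smul,
      inv_mul_cancel₀ (by positivity), one_smul]
  have hrank : (C - P).rank < Fintype.card n :=
    rank_lt_card_of_mulVec_eq_zero hy (by rw [sub_mulVec, hPy, sub_self])
  calc singVal C (Fintype.card n) ≤ ‖C - (C - P)‖ := singVal_le_norm_sub _ _ hrank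
    _ ≤ (‖toLp 2 y‖ ^ 2)⁻¹ * (‖toLp 2 (C *ᵥ y)‖ * ‖toLp 2 y‖) := by
        rw [sub_sub_cancel]
        exact (norm_smul_le _ _).trans (by
          rw [Real.norm_of_nonneg (by positivity)]
          gcongr
          exact norm_vecMulVec_le _ _)
    _ = ‖toLp 2 (C *ᵥ y)‖ / ‖toLp 2 y‖ := by field_simp

theorem mul_fromBlocks_diagonal_mul_transpose_mulVec {l k R : Type*} [Fintype k] [CommRing R]
    [DecidableEq m] [DecidableEq n] (S : Matrix l (m ⊕ n) R) {T : Matrix k (m ⊕ n) R}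
    (hT : Tᵀ * T = 1) (σ x : m → R) (w : n → R) :
    (S * (fromBlocks (diagonal σ) 0 0 0 : Matrix (m ⊕ n) (m ⊕ n) R) * Tᵀ) *ᵥ (T *ᵥ Sum.elim x w) =
      S *ᵥ Sum.elim (diagonal σ *ᵥ x) 0 := by
  rw [mulVec_mulVec, Matrix.mul_assoc, hT, Matrix.mul_one, ← mulVec_mulVec,
    fromBlocks_mulVec]
  simp only [Sum.elim_comp_inl, Sum.elim_comp_inr, zero_mulVec, add_zero]

end Matrix

theorem stmt16 {ρ r : ℕ} (hρ : 0 < ρ)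
    (σ : Fin ρ → ℝ) (hσ : ∀ j, 0 < σ j)
    (S T : Matrix (Fin ρ ⊕ Fin r) (Fin ρ ⊕ Fin r) ℝ)
    (hS : Sᵀ * S = 1) (hT : Tᵀ * T = 1)
    (A Sig : Matrix (Fin ρ ⊕ Fin r) (Fin ρ ⊕ Fin r) ℝ)
    (hSig : Sig = Matrix.fromBlocks (Matrix.diagonal σ) 0 0 0)
    (hA : A = S * Sig * Tᵀ)
    (U V : Matrix (Fin ρ ⊕ Fin r) (Fin r) ℝ)
    (Vb : Matrix (Fin ρ) (Fin r) ℝ) (Vr : Matrix (Fin r) (Fin r) ℝ)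
    (hV : Tᵀ * V = Matrix.fromRows Vb Vr)
    (hVr : IsUnit Vr)
    (C : Matrix (Fin ρ ⊕ Fin r) (Fin ρ ⊕ Fin r) ℝ)
    (hC : C = A + U * Vᵀ) (hCu : IsUnit C) :
    singVal C (ρ + r) ≤ σ ⟨ρ - 1, by omega⟩ ∧
    1 / σ ⟨ρ - 1, by omega⟩ ≤ ‖C⁻¹‖ := by
  classical
  set k : Fin ρ := ⟨ρ - 1, by omega⟩
  have hVT : Vᵀ * T = fromCols Vbᵀ Vrᵀ := by
    rw [← transpose_fromRows, ← hV, transpose_mul, transpose_transpose]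
  obtain ⟨w, hw⟩ :=
    exists_fromCols_mulVec_sumElim_eq_zero Vbᵀ ((isUnit_transpose _).mpr hVr) (Pi.single k 1)
  have hCy : C *ᵥ (T *ᵥ Sum.elim (Pi.single k 1) w) = S *ᵥ Sum.elim (Pi.single k (σ k)) 0 := by
    rw [hC, add_mulVec, ← mulVec_mulVec, mulVec_mulVec _ Vᵀ, hVT, hw, mulVec_zero, add_zero, hA,
      hSig, mul_fromBlocks_diagonal_mul_transpose_mulVec S hT, diagonal_mulVec_single, mul_one]
  set y := T *ᵥ Sum.elim (Pi.single k 1) w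
  have hnCy : ‖toLp 2 (C *ᵥ y)‖ = σ k := by
    rw [hCy, norm_toLp_mulVec_of_transpose_mul_self hS, norm_toLp_sumElim_zero, PiLp.toLp_single,
      PiLp.norm_single, Real.norm_of_nonneg (hσ k).le]
  have hny : 1 ≤ ‖toLp 2 y‖ := by
    rw [norm_toLp_mulVec_of_transpose_mul_self hT]
    simpa [PiLp.toLp_single] using norm_toLp_le_norm_toLp_sumElim (Pi.single k (1 : ℝ)) w
  have hy0 : y ≠ 0 := by rintro h; norm_num [h] at hny
  constructor
  · calc singVal C (ρ + r) ≤ ‖toLp 2 (C *ᵥ y)‖ / ‖toLp 2 y‖ := by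
          simpa using singVal_card_le_norm_mulVec_div C hy0
      _ ≤ σ k := by rw [hnCy]; exact div_le_self (hσ k).le hny
  · rw [div_le_iff₀ (hσ k)]
    calc 1 ≤ ‖toLp 2 y‖ := hny
      _ ≤ ‖C⁻¹‖ * σ k := hnCy ▸ norm_toLp_le_norm_inv_mul hCu y
end
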